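/- arXiv:2604.27785 — 2 statements merged into one kernel-verified Lean document; each statement's English description precedes it below -/
import Mathlib

section
/- Define f_j(u) by f_{-1}(u)=0, f_0(u)=1, f_j(u)=f_{j-1}(u)+u f_{j-2}(u), and g_j(u)=f_j(u)+u f_{j-2}(u) for j≥1. For fixed integers r,s≥1 and ℓ≥2, define T(u)=f_{ℓ-1}(u), R(u)=f_{ℓ-1}(u)g_s(u)+u f_{ℓ-2}(u)f_{s-1}(u), S(u)=f_{ℓ-1}(u)g_r(u)+u f_{ℓ-2}(u)f_{r-1}(u), and M(u)=f_{ℓ-1}(u)g_r(u)g_s(u)+u f_{ℓ-2}(u)(f_{r-1}(u)g_s(u)+f_{s-1}(u)g_r(u))+u^2 f_{ℓ-3}(u)f_{r-1}(u)f_{s-1}(u). Then R(u)S(u) − M(u)T(u) = (−1)^ℓ · u^ℓ · f_{r-1}(u) f_{s-1}(u). -/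
/-- `fib u j` represents `f_{j-1}(u)`: `f_{-1}=0`, `f_0=1`, `f_j=f_{j-1}+u·f_{j-2}`. -/
def fib (u : ℝ) : ℕ → ℝ
  | 0 => 0
  | 1 => 1
  | (j + 2) => fib u (j + 1) + u * fib u j

/-- `g_j(u) = f_j(u) + u·f_{j-2}(u)`, i.e. `gpoly u j = fib u (j+1) + u * fib u (j-1)`. -/
def gpoly (u : ℝ) (j : ℕ) : ℝ := fib u (j + 1) + u * fib u (j - 1)

lemma fib_catalan (u : ℝ) : ∀ n, fib u (n+1)^2 - fib u n * fib u (n+2) = (-1:ℝ)^n * u^n := by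
  intro n
  induction n with
  | zero => simp [fib]
  | succ k ih =>
    have h1 : fib u (k+3) = fib u (k+2) + u * fib u (k+1) := rfl
    have h2 : fib u (k+2) = fib u (k+1) + u * fib u k := rfl
    rw [show k+1+1 = k+2 from rfl, show k+1+2 = k+3 from rfl, h1, h2]
    rw [h2] at ih
    ring_nf
    ring_nf at ih
    linear_combination (-u) * ih

/-- R·S − M·T = (−1)^ℓ u^ℓ f_{r-1} f_{s-1} for the dumbbell polynomials. -/
theorem dumbbell_RS_sub_MT (r s ℓ : ℕ) (hr : 1 ≤ r) (hs : 1 ≤ s) (hℓ : 2 ≤ ℓ) (u : ℝ) :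
    let f : ℕ → ℝ := fun j => fib u (j + 1)   -- f j = f_j(u), and f_{ℓ-3}(u) = fib u (ℓ-2)
    let T : ℝ := f (ℓ - 1)
    let R : ℝ := f (ℓ - 1) * gpoly u s + u * f (ℓ - 2) * f (s - 1)
    let S : ℝ := f (ℓ - 1) * gpoly u r + u * f (ℓ - 2) * f (r - 1)
    let M : ℝ := f (ℓ - 1) * gpoly u r * gpoly u s
      + u * f (ℓ - 2) * (f (r - 1) * gpoly u s + f (s - 1) * gpoly u r)
      + u ^ 2 * fib u (ℓ - 2) * f (r - 1) * f (s - 1)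
    R * S - M * T = (-1 : ℝ) ^ ℓ * u ^ ℓ * f (r - 1) * f (s - 1) := by
  obtain ⟨k, rfl⟩ : ∃ k, ℓ = k + 2 := ⟨ℓ - 2, by omega⟩
  obtain ⟨r, rfl⟩ : ∃ r', r = r' + 1 := ⟨r - 1, by omega⟩
  obtain ⟨s, rfl⟩ : ∃ s', s = s' + 1 := ⟨s - 1, by omega⟩
  intro f T R S M
  simp only [f, T, R, S, M, Nat.add_sub_cancel, show k+2-1 = k+1 from by omega,
    show k+2-2 = k from by omega]
  have h := fib_catalan u k
  linear_combination u^2 * fib u (r+1) * fib u (s+1) * h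
end

section
/- Let Z, W, X, Y be real numbers with Z > 0, W > 0, and XY − ZW > 0. Define K(α,β) = (Z − αβW)^2 + (αX + βY)^2. Then for all (α,β) ∈ [−1,1]^2, K(α,β) ≥ Z^2, with equality if and only if (α,β) = (0,0). -/
/-- Minimum of the odd-odd kernel with even ℓ: `K(α,β) ≥ Z²` on `[−1,1]²`,
with equality iff `(α,β) = (0,0)`. -/
theorem kernel_min_at_origin (Z W X Y : ℝ) (hZ : 0 < Z) (hW : 0 < W)
    (hXY : 0 < X * Y - Z * W) (α β : ℝ)
    (hα : α ∈ Set.Icc (-1 : ℝ) 1) (hβ : β ∈ Set.Icc (-1 : ℝ) 1) :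
    Z ^ 2 ≤ (Z - α * β * W) ^ 2 + (α * X + β * Y) ^ 2 ∧
    ((Z - α * β * W) ^ 2 + (α * X + β * Y) ^ 2 = Z ^ 2 ↔ α = 0 ∧ β = 0) := by
  have hZW : 0 < Z * W := mul_pos hZ hW
  have hXY2 : 0 < X * Y := lt_trans hZW (by linarith)
  have hX : X ≠ 0 := fun h => by simp [h] at hXY2
  have hX2 : 0 < X ^ 2 := by positivity
  have h2 : 0 < 2 * (X * Y) - Z * W := by linarith
  have key : X ^ 2 * ((Z - α * β * W) ^ 2 + (α * X + β * Y) ^ 2 - Z ^ 2)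
      = (α * X ^ 2 + β * (X * Y - Z * W)) ^ 2
        + β ^ 2 * (Z * W * (2 * (X * Y) - Z * W))
        + X ^ 2 * (α * β * W) ^ 2 := by ring
  constructor
  · nlinarith [sq_nonneg (α * X ^ 2 + β * (X * Y - Z * W)), sq_nonneg β,
      sq_nonneg (α * β * W), mul_pos hZW h2, sq_nonneg (β * (Z * W)),
      mul_nonneg (sq_nonneg β) (le_of_lt (mul_pos hZW h2)),
      mul_nonneg (le_of_lt hX2) (sq_nonneg (α * β * W))]
  · constructor
    · intro heq
      have h0 : (α * X ^ 2 + β * (X * Y - Z * W)) ^ 2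
          + β ^ 2 * (Z * W * (2 * (X * Y) - Z * W))
          + X ^ 2 * (α * β * W) ^ 2 = 0 := by
        rw [← key, heq]; ring
      have hβ0 : β = 0 := by
        have hb2 : β ^ 2 ≤ 0 := by
          by_contra h
          push_neg at h
          nlinarith [sq_nonneg (α * X ^ 2 + β * (X * Y - Z * W)),
            mul_nonneg (le_of_lt hX2) (sq_nonneg (α * β * W)),
            mul_pos h (mul_pos hZW h2)]
        have : β ^ 2 = 0 := le_antisymm hb2 (sq_nonneg β)
        exact pow_eq_zero_iff (n := 2) (by norm_num) |>.mp this
      subst hβ0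
      have hα0 : α = 0 := by
        have : (α * X ^ 2) ^ 2 = 0 := by nlinarith
        have := pow_eq_zero_iff (n := 2) (by norm_num) |>.mp this
        exact (mul_eq_zero.mp this).resolve_right (by positivity)
      exact ⟨hα0, rfl⟩
    · rintro ⟨rfl, rfl⟩; ring
end
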